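/- arXiv:2302.09703 — 4 statements merged into one kernel-verified Lean document; each statement's English description precedes it below -/
import Mathlib

section
/- Let A be a finite nonempty set, q : A → ℝ, and β > 0. Then max_{a∈A} q_a − (Σ_{a∈A} q_a·exp(β q_a)) / (Σ_{a∈A} exp(β q_a)) ≤ (log|A|)/β, and this quantity is nonnegative. -/
/-!
Let `p_a = exp (β q_a) / Z` with `Z = ∑ exp (β q_a)` be the softmax (Gibbs) weights. Their
entropy `H(p) = ∑ -p_a log p_a` equals `log Z - β ⟨q⟩_p`, and it is at most `log |A|` by Jensen's
inequality for the concave function `x ↦ -x log x`. Since `exp (β max q) ≤ Z`, we get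
`β (max q - ⟨q⟩_p) ≤ log Z - β ⟨q⟩_p = H(p) ≤ log |A|`. Nonnegativity holds because a weighted
average is at most the maximum.
-/

open Finset Real

theorem Real.sum_negMulLog_le_log_card {ι : Type*} {s : Finset ι} {w : ι → ℝ}
    (hw₀ : ∀ i ∈ s, 0 ≤ w i) (hw₁ : ∑ i ∈ s, w i = 1) :
    ∑ i ∈ s, negMulLog (w i) ≤ log #s := by
  have hs : (0 : ℝ) < #s := by
    rw [Nat.cast_pos, card_pos]
    exact nonempty_of_sum_ne_zero (by rw [hw₁]; exact one_ne_zero)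
  have jensen := concaveOn_negMulLog.le_map_sum (t := s) (w := fun _ ↦ (#s : ℝ)⁻¹) (p := w)
    (fun _ _ ↦ by positivity) (by simp [hs.ne']) hw₀
  simp only [smul_eq_mul, ← mul_sum, hw₁, mul_one] at jensen
  rwa [negMulLog, log_inv, neg_mul_neg, mul_le_mul_iff_right₀ (inv_pos.2 hs)] at jensen

theorem Real.le_log_sum_exp {ι : Type*} {s : Finset ι} (f : ι → ℝ) {i : ι} (hi : i ∈ s) :
    f i ≤ log (∑ j ∈ s, exp (f j)) := by
  rw [← exp_le_exp, exp_log (sum_pos (fun j _ ↦ exp_pos _) ⟨i, hi⟩)]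
  exact single_le_sum (fun j _ ↦ (exp_pos _).le) hi

theorem Real.sum_negMulLog_softmax {ι : Type*} {s : Finset ι} (hs : s.Nonempty)
    (f : ι → ℝ) (β : ℝ) :
    ∑ i ∈ s, negMulLog (exp (β * f i) / ∑ j ∈ s, exp (β * f j)) =
      log (∑ j ∈ s, exp (β * f j)) -
        β * ((∑ i ∈ s, f i * exp (β * f i)) / ∑ j ∈ s, exp (β * f j)) := by
  set Z := ∑ j ∈ s, exp (β * f j)
  have hZ : 0 < Z := sum_pos (fun j _ ↦ exp_pos _) hs
  have hterm : ∀ i, negMulLog (exp (β * f i) / Z) =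
      (exp (β * f i) * log Z - β * (f i * exp (β * f i))) / Z := by
    intro i
    rw [negMulLog, log_div (exp_pos _).ne' hZ.ne', log_exp]
    ring
  simp only [hterm, ← sum_div, sum_sub_distrib, ← sum_mul, ← mul_sum, sub_div]
  rw [mul_div_right_comm, div_self hZ.ne', one_mul, mul_div_assoc]

/-- Let `A` be a finite nonempty set, `q : A → ℝ`, and `β > 0`. Then
`max_a q_a − (Σ_a q_a·exp(β q_a)) / (Σ_a exp(β q_a)) ≤ log|A|/β`,
and this quantity is nonnegative. -/
theorem max_sub_softmax_avg_le {A : Type*} [Fintype A] [Nonempty A]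
    (q : A → ℝ) (β : ℝ) (hβ : 0 < β) :
    Finset.univ.sup' Finset.univ_nonempty q -
        (∑ a : A, q a * Real.exp (β * q a)) / (∑ a : A, Real.exp (β * q a)) ≤
      Real.log (Fintype.card A) / β ∧
    0 ≤ Finset.univ.sup' Finset.univ_nonempty q -
        (∑ a : A, q a * Real.exp (β * q a)) / (∑ a : A, Real.exp (β * q a)) := by
  set M := univ.sup' univ_nonempty q
  set Z := ∑ a : A, exp (β * q a)
  set avg := (∑ a : A, q a * exp (β * q a)) / Z
  have hZ : 0 < Z := sum_pos (fun a _ ↦ exp_pos _) univ_nonempty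
  have avg_le_max : avg ≤ M := by
    have := centerMass_le_sup (s := univ) (f := q) (w := fun a ↦ exp (β * q a))
      (fun a _ ↦ (exp_pos _).le) hZ
    simpa only [centerMass, smul_eq_mul, inv_mul_eq_div, mul_comm (exp _)] using this
  have max_le_logZ : β * M ≤ log Z := by
    obtain ⟨a, -, ha⟩ := exists_mem_eq_sup' univ_nonempty q
    rw [show M = q a from ha]
    exact le_log_sum_exp (fun a ↦ β * q a) (mem_univ a)
  have entropy_eq : ∑ a, negMulLog (exp (β * q a) / Z) = log Z - β * avg :=
    sum_negMulLog_softmax univ_nonempty q β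
  have entropy_le : ∑ a, negMulLog (exp (β * q a) / Z) ≤ log (Fintype.card A) := by
    rw [← card_univ]
    exact sum_negMulLog_le_log_card (fun a _ ↦ by positivity) (by rw [← sum_div, div_self hZ.ne'])
  refine ⟨?_, sub_nonneg.2 avg_le_max⟩
  rw [le_div_iff₀ hβ]
  linarith
end

section
/- Let A be a finite nonempty set, q, q̄ : A → ℝ, and β > 0. Then Σ_{a∈A} | exp(β q_a)/Σ_{a'∈A} exp(β q_{a'}) − exp(β q̄_a)/Σ_{a'∈A} exp(β q̄_{a'}) | ≤ 2β · max_{a∈A} |q_a − q̄_a|. That is, the total-variation distance between the two softmax distributions is bounded by 2β times the sup-norm distance of q and q̄. -/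
/-!
Write `p = softmax (β q)` and `p' = softmax (β q̄)`, and let `ε = max_a |q_a - q̄_a|`.
Log-sum-exp is `1`-Lipschitz for the sup norm, so `log p_a - log p'_a`, which is
`β (q_a - q̄_a)` minus a difference of log-sum-exps, is at most `2βε` in absolute value.
The logarithmic mean is at most the arithmetic mean, `2 |x - y| ≤ (x + y) |log x - log y|`;
summing this over `a` and using `∑ (p_a + p'_a) = 2` gives the bound.
-/

open Real Finset

namespace Real

lemma monotone_mul_exp_add_one_sub_two_mul_exp_sub_one :
    Monotone fun u : ℝ => u * (exp u + 1) - 2 * (exp u - 1) := by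
  have hderiv : ∀ u : ℝ, HasDerivAt (fun u : ℝ => u * (exp u + 1) - 2 * (exp u - 1))
      (1 + (u - 1) * exp u) u := fun u =>
    (((hasDerivAt_id' u).fun_mul ((hasDerivAt_exp u).add_const 1)).fun_sub
      (((hasDerivAt_exp u).sub_const 1).const_mul 2)).congr_deriv (by ring)
  refine monotone_of_deriv_nonneg (fun u => (hderiv u).differentiableAt) fun u => ?_
  rw [(hderiv u).deriv]
  -- `(1 - u) exp u ≤ 1` is `1 - u ≤ exp (-u)` multiplied by `exp u`
  have h := mul_le_mul_of_nonneg_right (add_one_le_exp (-u)) (exp_pos u).le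
  rw [← exp_add, neg_add_cancel, exp_zero] at h
  linarith

lemma two_mul_abs_exp_sub_one_le (u : ℝ) : 2 * |exp u - 1| ≤ |u| * (exp u + 1) := by
  rcases le_total 0 u with hu | hu
  · have h := monotone_mul_exp_add_one_sub_two_mul_exp_sub_one hu
    simp only [exp_zero] at h
    rw [abs_of_nonneg (sub_nonneg.2 (one_le_exp hu)), abs_of_nonneg hu]
    linarith
  · have h := monotone_mul_exp_add_one_sub_two_mul_exp_sub_one hu
    simp only [exp_zero] at h
    rw [abs_of_nonpos (sub_nonpos.2 (exp_le_one_iff.2 hu)), abs_of_nonpos hu]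
    linarith

lemma two_mul_abs_sub_le_mul_abs_log_sub {x y : ℝ} (hx : 0 < x) (hy : 0 < y) :
    2 * |x - y| ≤ (x + y) * |log x - log y| := by
  set u := log x - log y
  have hxy : x = y * exp u := by
    rw [exp_sub, exp_log hx, exp_log hy]
    field_simp
  rw [hxy, ← mul_sub_one, abs_mul, abs_of_pos hy]
  nlinarith [two_mul_abs_exp_sub_one_le u]

end Real

lemma sum_abs_sub_le_of_abs_log_sub_le {ι : Type*} [Fintype ι] {p p' : ι → ℝ}
    (hp : ∀ a, 0 < p a) (hp' : ∀ a, 0 < p' a) (hp1 : ∑ a, p a = 1) (hp'1 : ∑ a, p' a = 1)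
    {δ : ℝ} (h : ∀ a, |log (p a) - log (p' a)| ≤ δ) :
    ∑ a, |p a - p' a| ≤ δ := by
  suffices 2 * ∑ a, |p a - p' a| ≤ 2 * δ by linarith
  calc 2 * ∑ a, |p a - p' a| = ∑ a, 2 * |p a - p' a| := mul_sum _ _ _
    _ ≤ ∑ a, (p a + p' a) * δ := sum_le_sum fun a _ =>
        (two_mul_abs_sub_le_mul_abs_log_sub (hp a) (hp' a)).trans
          (mul_le_mul_of_nonneg_left (h a) (add_pos (hp a) (hp' a)).le)
    _ = 2 * δ := by rw [← sum_mul, sum_add_distrib, hp1, hp'1, one_add_one_eq_two]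

section Softmax

variable {ι : Type*} [Fintype ι]

noncomputable def softmax (x : ι → ℝ) (a : ι) : ℝ :=
  exp (x a) / ∑ b, exp (x b)

lemma sum_exp_pos [Nonempty ι] (x : ι → ℝ) : 0 < ∑ b, exp (x b) :=
  sum_pos (fun b _ => exp_pos (x b)) univ_nonempty

lemma softmax_pos [Nonempty ι] (x : ι → ℝ) (a : ι) : 0 < softmax x a :=
  div_pos (exp_pos _) (sum_exp_pos x)

lemma sum_softmax [Nonempty ι] (x : ι → ℝ) : ∑ a, softmax x a = 1 := by
  simp only [softmax]
  rw [← sum_div, div_self (sum_exp_pos x).ne']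

lemma log_softmax [Nonempty ι] (x : ι → ℝ) (a : ι) :
    log (softmax x a) = x a - log (∑ b, exp (x b)) := by
  rw [softmax, log_div (exp_pos _).ne' (sum_exp_pos x).ne', log_exp]

lemma log_sum_exp_le_add [Nonempty ι] {x y : ι → ℝ} {δ : ℝ} (h : ∀ a, y a ≤ x a + δ) :
    log (∑ b, exp (y b)) ≤ log (∑ b, exp (x b)) + δ := by
  have hsum : ∑ b, exp (y b) ≤ exp δ * ∑ b, exp (x b) := by
    rw [mul_sum]
    exact sum_le_sum fun b _ => by rw [← exp_add, add_comm]; exact exp_le_exp.2 (h b)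
  calc log (∑ b, exp (y b)) ≤ log (exp δ * ∑ b, exp (x b)) :=
        log_le_log (sum_exp_pos y) hsum
    _ = log (∑ b, exp (x b)) + δ := by
        rw [log_mul (exp_pos δ).ne' (sum_exp_pos x).ne', log_exp, add_comm]

lemma abs_log_sum_exp_sub_le [Nonempty ι] {x y : ι → ℝ} {δ : ℝ} (h : ∀ a, |x a - y a| ≤ δ) :
    |log (∑ b, exp (x b)) - log (∑ b, exp (y b))| ≤ δ := by
  have hxy := log_sum_exp_le_add (x := y) (y := x) (δ := δ) fun a => by
    linarith [(abs_le.1 (h a)).2]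
  have hyx := log_sum_exp_le_add (x := x) (y := y) (δ := δ) fun a => by
    linarith [(abs_le.1 (h a)).1]
  exact abs_sub_le_iff.2 ⟨by linarith, by linarith⟩

lemma abs_log_softmax_sub_le [Nonempty ι] {x y : ι → ℝ} {δ : ℝ} (h : ∀ a, |x a - y a| ≤ δ)
    (a : ι) : |log (softmax x a) - log (softmax y a)| ≤ 2 * δ := by
  rw [log_softmax, log_softmax]
  calc |x a - log (∑ b, exp (x b)) - (y a - log (∑ b, exp (y b)))|
      = |(x a - y a) - (log (∑ b, exp (x b)) - log (∑ b, exp (y b)))| := by ring_nf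
    _ ≤ |x a - y a| + |log (∑ b, exp (x b)) - log (∑ b, exp (y b))| := abs_sub _ _
    _ ≤ 2 * δ := by linarith [h a, abs_log_sum_exp_sub_le h]

lemma sum_abs_softmax_sub_le [Nonempty ι] {x y : ι → ℝ} {δ : ℝ} (h : ∀ a, |x a - y a| ≤ δ) :
    ∑ a, |softmax x a - softmax y a| ≤ 2 * δ :=
  sum_abs_sub_le_of_abs_log_sub_le (softmax_pos x) (softmax_pos y) (sum_softmax x)
    (sum_softmax y) (abs_log_softmax_sub_le h)

end Softmax

/-- The total-variation distance between two softmax distributions is bounded by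
`2β` times the sup-norm distance of the score vectors. -/
theorem softmax_total_variation_le {A : Type*} [Fintype A] [Nonempty A]
    (q qbar : A → ℝ) (β : ℝ) (hβ : 0 < β) :
    ∑ a : A,
        |Real.exp (β * q a) / (∑ a' : A, Real.exp (β * q a')) -
          Real.exp (β * qbar a) / (∑ a' : A, Real.exp (β * qbar a'))| ≤
      2 * β * Finset.univ.sup' Finset.univ_nonempty (fun a => |q a - qbar a|) := by
  have hclose : ∀ a, |β * q a - β * qbar a| ≤
      β * Finset.univ.sup' Finset.univ_nonempty (fun a => |q a - qbar a|) := fun a => by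
    rw [← mul_sub, abs_mul, abs_of_pos hβ]
    exact mul_le_mul_of_nonneg_left (le_sup' (fun a => |q a - qbar a|) (mem_univ a)) hβ.le
  rw [mul_assoc]
  exact sum_abs_softmax_sub_le hclose
end

section
/- The following two statements are equivalent: (1) there exist a vector θ ∈ ℝ^d and finite signed Borel measures μ_1,…,μ_d on S such that for all (s,a) ∈ S×A, r(s,a) = ⟨φ(s,a), θ⟩ and P(s,a)(E) = Σ_{i=1}^d φ_i(s,a)·μ_i(E) for every Borel set E ⊆ S; (2) there exists a constant C > 0 such that for every bounded continuous f : S → ℝ there exists ω_f ∈ ℝ^d with r(s,a) + ∫_S f(s') dP(s,a)(s') = ⟨φ(s,a), ω_f⟩ for all (s,a) ∈ S×A and ‖ω_f‖ ≤ C·(‖f‖_{C(S)} + 1). -/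
/-!
(1) ⇒ (2): integrating `f` against `P(s,a) = ∑ φᵢ(s,a) μᵢ` gives
`r + ∫ f dP = ⟨φ, θ + (∫ f dμᵢ)ᵢ⟩`, and `|∫ f dμᵢ| ≤ ‖f‖ |μᵢ|(S)`.

(2) ⇒ (1): `f = 0` yields `θ`, and then `∫ f dP(s,a) = ⟨φ(s,a), ω_f - θ⟩`. Hence a linear
relation `∑ cₖ φ(qₖ) = 0` forces `∑ cₖ ∫ f dP(qₖ) = 0` for every bounded continuous `f`,
i.e. `∑ cₖ P(qₖ) = 0` as a signed measure, since finite signed Borel measures on a metric space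
are determined by their integrals of bounded continuous functions. So `φ(s,a) ↦ P(s,a)` extends
to a linear map `T` from `ℝᵈ` to signed measures, and `μᵢ := T eᵢ`.
-/

open MeasureTheory
open scoped RealInnerProductSpace BoundedContinuousFunction

theorem LinearMap.exists_comp_eq_of_ker_le {K M V W : Type*} [DivisionRing K]
    [AddCommGroup M] [Module K M] [AddCommGroup V] [Module K V] [AddCommGroup W] [Module K W]
    {f : M →ₗ[K] V} {g : M →ₗ[K] W} (h : ker f ≤ ker g) : ∃ T : V →ₗ[K] W, T ∘ₗ f = g := by
  obtain ⟨T, hT⟩ := LinearMap.exists_extend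
    ((ker f).liftQ g h ∘ₗ f.quotKerEquivRange.symm.toLinearMap)
  refine ⟨T, LinearMap.ext fun x => ?_⟩
  have := congr($hT ⟨f x, LinearMap.mem_range_self f x⟩)
  simpa [LinearMap.quotKerEquivRange_symm_apply_image] using this

theorem EuclideanSpace.linearMap_apply_eq_sum {ι W : Type*} [Fintype ι] [DecidableEq ι]
    [AddCommGroup W] [Module ℝ W] (T : EuclideanSpace ℝ ι →ₗ[ℝ] W) (x : EuclideanSpace ℝ ι) :
    T x = ∑ i, x i • T (EuclideanSpace.single i 1) := by
  conv_lhs => rw [← (EuclideanSpace.basisFun ι ℝ).sum_repr x]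
  simp

namespace MeasureTheory

variable {X : Type*} [MeasurableSpace X]

theorem Measure.toSignedMeasure_eq_sum_smul_iff {ι : Type*} (s : Finset ι) (ν : Measure X)
    [IsFiniteMeasure ν] (c : ι → ℝ) (μ : ι → SignedMeasure X) :
    ν.toSignedMeasure = ∑ i ∈ s, c i • μ i ↔
      ∀ E, MeasurableSet E → ν.real E = ∑ i ∈ s, c i * μ i E := by
  rw [VectorMeasure.ext_iff]
  refine forall₂_congr fun E hE => ?_
  simp only [toSignedMeasure_apply_measurable hE, _root_.sum_apply, _root_.smul_apply,
    smul_eq_mul]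

namespace SignedMeasure

open VectorMeasure

instance isFiniteMeasure_variation (μ : SignedMeasure X) : IsFiniteMeasure μ.variation := by
  rw [← totalVariation_eq_variation]
  unfold totalVariation
  infer_instance

theorem integral_eq_integral_posPart_sub_integral_negPart (μ : SignedMeasure X) {f : X → ℝ}
    (hf : Integrable f μ.variation) :
    ∫ᵛ x, f x ∂<•μ = ∫ x, f x ∂μ.toJordanDecomposition.posPart -
      ∫ x, f x ∂μ.toJordanDecomposition.negPart := by
  rw [← totalVariation_eq_variation, totalVariation, integrable_add_measure] at hf
  conv_lhs => rw [← μ.toSignedMeasure_toJordanDecomposition]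
  rw [JordanDecomposition.toSignedMeasure, integral_sub_vectorMeasure]
  · rw [integral_toSignedMeasure, integral_toSignedMeasure]
  · rw [VectorMeasure.Integrable, Measure.variation_toSignedMeasure]; exact hf.1
  · rw [VectorMeasure.Integrable, Measure.variation_toSignedMeasure]; exact hf.2

theorem ext_of_forall_integral_eq [TopologicalSpace X] [HasOuterApproxClosed X] [BorelSpace X]
    {μ ν : SignedMeasure X} (h : ∀ f : X →ᵇ ℝ, ∫ᵛ x, f x ∂<•μ = ∫ᵛ x, f x ∂<•ν) : μ = ν := by
  set j := μ.toJordanDecomposition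
  set k := ν.toJordanDecomposition
  have hmeas : j.posPart + k.negPart = k.posPart + j.negPart := by
    refine ext_of_forall_integral_eq_of_IsFiniteMeasure fun f => ?_
    have := h f
    rw [integral_eq_integral_posPart_sub_integral_negPart _ (f.integrable _),
      integral_eq_integral_posPart_sub_integral_negPart _ (f.integrable _)] at this
    rw [integral_add_measure (f.integrable _) (f.integrable _),
      integral_add_measure (f.integrable _) (f.integrable _)]
    linarith
  rw [← μ.toSignedMeasure_toJordanDecomposition, ← ν.toSignedMeasure_toJordanDecomposition,
    JordanDecomposition.toSignedMeasure, JordanDecomposition.toSignedMeasure,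
    sub_eq_sub_iff_add_eq_add, ← Measure.toSignedMeasure_add, ← Measure.toSignedMeasure_add]
  exact Measure.toSignedMeasure_congr hmeas

theorem integral_sum_smul {ι : Type*} (s : Finset ι) (c : ι → ℝ) (μ : ι → SignedMeasure X)
    {f : X → ℝ} (hf : ∀ i ∈ s, Integrable f (μ i).variation) :
    ∫ᵛ x, f x ∂<•(∑ i ∈ s, c i • μ i) = ∑ i ∈ s, c i * ∫ᵛ x, f x ∂<•μ i := by
  rw [integral_finsetSum_vectorMeasure fun i hi =>
    VectorMeasure.Integrable.smul_vectorMeasure (hf i hi) (c i)]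
  simp

theorem norm_integral_le_of_norm_le_const (μ : SignedMeasure X) {f : X → ℝ} {C : ℝ}
    (hf : ∀ x, ‖f x‖ ≤ C) : ‖∫ᵛ x, f x ∂<•μ‖ ≤ C * μ.variation.real Set.univ := by
  simpa using VectorMeasure.norm_integral_le_of_norm_le_const (μ := μ)
    (B := (ContinuousLinearMap.lsmul ℝ ℝ).flip) (Filter.Eventually.of_forall hf)

end SignedMeasure

section IntegralVector

open VectorMeasure

variable {ι : Type*} [Fintype ι] [DecidableEq ι]

noncomputable def integralVector (μ : ι → SignedMeasure X) (f : X → ℝ) : EuclideanSpace ℝ ι :=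
  ∑ i, (∫ᵛ x, f x ∂<•μ i) • EuclideanSpace.single i 1

theorem integral_eq_inner_integralVector {ν : Measure X} [IsFiniteMeasure ν]
    {x : EuclideanSpace ℝ ι} {μ : ι → SignedMeasure X}
    (hν : ν.toSignedMeasure = ∑ i, x i • μ i) {f : X → ℝ}
    (hf : ∀ i, Integrable f (μ i).variation) :
    ∫ y, f y ∂ν = ⟪x, integralVector μ f⟫ := by
  rw [← integral_toSignedMeasure, hν, SignedMeasure.integral_sum_smul _ _ _ fun i _ => hf i]
  simp [integralVector, inner_sum, inner_smul_right, EuclideanSpace.inner_single_right, mul_comm]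

theorem norm_integralVector_le (μ : ι → SignedMeasure X) {f : X → ℝ} {C : ℝ}
    (hf : ∀ x, ‖f x‖ ≤ C) :
    ‖integralVector μ f‖ ≤ C * ∑ i, (μ i).variation.real Set.univ := calc
  _ ≤ ∑ i, ‖(∫ᵛ x, f x ∂<•μ i) • EuclideanSpace.single i (1 : ℝ)‖ := norm_sum_le _ _
  _ = ∑ i, ‖∫ᵛ x, f x ∂<•μ i‖ := by simp [norm_smul]
  _ ≤ C * ∑ i, (μ i).variation.real Set.univ := by
    rw [Finset.mul_sum]
    exact Finset.sum_le_sum fun i _ => SignedMeasure.norm_integral_le_of_norm_le_const _ hf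

end IntegralVector

section LinearKernel

variable [TopologicalSpace X] [HasOuterApproxClosed X] [BorelSpace X]
  {ι E : Type*} [AddCommGroup E] [Module ℝ E]

theorem ker_linearCombination_le_ker_toSignedMeasure
    (v : ι → E) (Q : ι → Measure X) [∀ i, IsFiniteMeasure (Q i)]
    (h : ∀ f : X →ᵇ ℝ, ∃ L : E →ₗ[ℝ] ℝ, ∀ i, ∫ x, f x ∂Q i = L (v i)) :
    LinearMap.ker (Finsupp.linearCombination ℝ v) ≤
      LinearMap.ker (Finsupp.linearCombination ℝ fun i => (Q i).toSignedMeasure) := by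
  intro c hc
  rw [LinearMap.mem_ker] at hc ⊢
  refine SignedMeasure.ext_of_forall_integral_eq fun f => ?_
  obtain ⟨L, hL⟩ := h f
  calc ∫ᵛ x, f x ∂<•(Finsupp.linearCombination ℝ fun i => (Q i).toSignedMeasure) c
      = ∑ i ∈ c.support, c i * ∫ x, f x ∂Q i := by
        rw [Finsupp.linearCombination_apply, Finsupp.sum,
          SignedMeasure.integral_sum_smul _ _ _ fun i _ => f.integrable _]
        simp
    _ = L (Finsupp.linearCombination ℝ v c) := by
        simp [hL, Finsupp.linearCombination_apply, Finsupp.sum, map_sum]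
    _ = ∫ᵛ x, f x ∂<•(0 : SignedMeasure X) := by simp [hc]

theorem exists_linearMap_apply_eq_toSignedMeasure
    (v : ι → E) (Q : ι → Measure X) [∀ i, IsFiniteMeasure (Q i)]
    (h : ∀ f : X →ᵇ ℝ, ∃ L : E →ₗ[ℝ] ℝ, ∀ i, ∫ x, f x ∂Q i = L (v i)) :
    ∃ T : E →ₗ[ℝ] SignedMeasure X, ∀ i, T (v i) = (Q i).toSignedMeasure := by
  obtain ⟨T, hT⟩ := LinearMap.exists_comp_eq_of_ker_le
    (ker_linearCombination_le_ker_toSignedMeasure v Q h)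
  exact ⟨T, fun i => by simpa using congr($hT (Finsupp.single i 1))⟩

end LinearKernel

end MeasureTheory

theorem linear_mdp_iff_bellman_linear_general
    {S A : Type*} [MetricSpace S] [CompactSpace S] [MeasurableSpace S] [BorelSpace S]
    (d : ℕ) (φ : S → A → EuclideanSpace ℝ (Fin d))
    (r : S → A → ℝ) (P : S → A → Measure S)
    [∀ s a, IsProbabilityMeasure (P s a)] :
    (∃ (θ : EuclideanSpace ℝ (Fin d)) (μ : Fin d → SignedMeasure S),
        (∀ s a, r s a = ⟪φ s a, θ⟫) ∧
          ∀ s a, ∀ E : Set S, MeasurableSet E →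
            (P s a E).toReal = ∑ i, φ s a i * μ i E) ↔
      ∃ C : ℝ, 0 < C ∧ ∀ f : C(S, ℝ), ∃ ω : EuclideanSpace ℝ (Fin d),
        (∀ s a, r s a + ∫ s', f s' ∂(P s a) = ⟪φ s a, ω⟫) ∧ ‖ω‖ ≤ C * (‖f‖ + 1) := by
  constructor
  · rintro ⟨θ, μ, hr, hP⟩
    set M := ∑ i, (μ i).variation.real Set.univ
    refine ⟨‖θ‖ + M + 1, by positivity, fun f => ⟨θ + integralVector μ f, fun s a => ?_, ?_⟩⟩
    · rw [inner_add_right, ← hr, integral_eq_inner_integralVector (f := f)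
        ((Measure.toSignedMeasure_eq_sum_smul_iff _ _ _ _).2 (hP s a))
        fun i => (BoundedContinuousFunction.mkOfCompact f).integrable _]
    · have hM : 0 ≤ M := by positivity
      nlinarith [norm_add_le θ (integralVector μ f), norm_integralVector_le μ f.norm_coe_le_norm,
        norm_nonneg f, norm_nonneg θ]
  · rintro ⟨C, -, h⟩
    obtain ⟨ω₀, hω₀, -⟩ := h 0
    have hr : ∀ s a, r s a = ⟪φ s a, ω₀⟫ := fun s a => by simpa using hω₀ s a
    obtain ⟨T, hT⟩ := exists_linearMap_apply_eq_toSignedMeasure (fun q : S × A => φ q.1 q.2)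
      (fun q => P q.1 q.2) fun f => by
        obtain ⟨ω, hω, -⟩ := h f.toContinuousMap
        refine ⟨(innerₗ _).flip (ω - ω₀), fun q => ?_⟩
        rw [LinearMap.flip_apply, innerₗ_apply_apply, inner_sub_right, ← hω, ← hr]
        exact (add_sub_cancel_left _ _).symm
    refine ⟨ω₀, fun i => T (EuclideanSpace.single i 1), hr, fun s a => ?_⟩
    refine (Measure.toSignedMeasure_eq_sum_smul_iff _ _ _ _).1 ?_
    rw [← EuclideanSpace.linearMap_apply_eq_sum, ← hT (s, a)]

/-- A transition kernel `P` and reward `r` on a compact state-action space admit a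
linear-MDP representation `r = ⟨φ, θ⟩`, `P = φᵀμ` (with `d` finite signed measures
`μ_1,…,μ_d`) if and only if the Bellman operator `f ↦ r + ∫ f dP` maps every bounded
continuous function to a linear function `⟨φ, ω_f⟩` with `‖ω_f‖ ≤ C(‖f‖_{C(S)} + 1)`. -/
theorem linear_mdp_iff_bellman_linear
    {S A : Type*} [MetricSpace S] [CompactSpace S] [MeasurableSpace S] [BorelSpace S]
    [MetricSpace A] [CompactSpace A]
    (d : ℕ) (φ : S → A → EuclideanSpace ℝ (Fin d))
    (r : S → A → ℝ) (P : S → A → Measure S)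
    [∀ s a, IsProbabilityMeasure (P s a)] :
    (∃ (θ : EuclideanSpace ℝ (Fin d)) (μ : Fin d → SignedMeasure S),
        (∀ s a, r s a = ⟪φ s a, θ⟫) ∧
          ∀ s a, ∀ E : Set S, MeasurableSet E →
            (P s a E).toReal = ∑ i, φ s a i * μ i E) ↔
      ∃ C : ℝ, 0 < C ∧ ∀ f : C(S, ℝ), ∃ ω : EuclideanSpace ℝ (Fin d),
        (∀ s a, r s a + ∫ s', f s' ∂(P s a) = ⟪φ s a, ω⟫) ∧ ‖ω‖ ≤ C * (‖f‖ + 1) :=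
  linear_mdp_iff_bellman_linear_general d φ r P
end

section
/- Let x_1,…,x_n ∈ X and let G be a map from the closed unit ball {f ∈ H : ‖f‖ ≤ 1} to C(X) such that Gf = Gf' whenever ⟨f, Φ(x_i)⟩ = ⟨f', Φ(x_i)⟩ for all i = 1,…,n. Then sup_{‖f‖ ≤ 1} sup_{x ∈ X} | ⟨f, Φ(x)⟩ − (Gf)(x) | ≥ ( Σ_{i=n+1}^∞ λ_i )^{1/2}. In particular, the worst-case L^∞ error of any such estimator based on n point evaluations is lower bounded by the square root of the tail sum of the kernel eigenvalues. -/
open MeasureTheory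
open scoped RealInnerProductSpace ENNReal

/-!
Let `K` be the span of the `Φ (pts i)` and `r x` the component of `Φ x` orthogonal to `K`. A unit
vector `h ⊥ K` is invisible to the data, so `G h = G (-h)` and one of `±h` has error at least
`|⟪h, Φ x⟫|`; for `h = r x₀ / ‖r x₀‖` this is `‖r x₀‖`. Choosing `x₀` where `‖r‖²` is at least its
mean, it remains to show `∫ ‖r‖² ≥ ∑_{i ≥ n} λ_i`. Mercer's theorem gives `∫ ‖Φ‖² = ∑ λ_i`, and
`∫ ‖P_K Φ‖² ≤ ∑_{i < dim K} λ_i` is a Ky Fan bound: `u ↦ ∫ ⟪u, Φ⟫²` is the quadratic form of the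
covariance operator, whose eigenvectors `∫ ψ_i Φ dρ` have eigenvalues `λ_i`, and the Mercer
remainder controls this form off the span of the first `m` of them.
-/

open Finset Filter Topology

theorem sum_range_mul_le_sum_range_of_antitone {lam β : ℕ → ℝ} (hlam : Antitone lam)
    (hlam₀ : ∀ i, 0 ≤ lam i) (hβ₀ : ∀ i, 0 ≤ β i) (hβ₁ : ∀ i, β i ≤ 1) {m N : ℕ}
    (hβN : ∑ i ∈ range m, β i ≤ N) :
    ∑ i ∈ range m, lam i * β i ≤ ∑ i ∈ range N, lam i := by
  -- compare termwise with the extremal weights `β = 1` on `range N`, `β = 0` off it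
  have hterm : ∀ i, (lam i - lam N) * β i ≤ if i < N then lam i - lam N else 0 := by
    intro i
    split_ifs with hi
    · exact mul_le_of_le_one_right (sub_nonneg.2 (hlam hi.le)) (hβ₁ i)
    · exact mul_nonpos_of_nonpos_of_nonneg (sub_nonpos.2 (hlam (not_lt.1 hi))) (hβ₀ i)
  have hfilter : ∑ i ∈ range m, (if i < N then lam i - lam N else 0) ≤
      ∑ i ∈ range N, (lam i - lam N) := by
    rw [← sum_filter]
    exact sum_le_sum_of_subset_of_nonneg (fun i hi => by simp_all)
      fun i hi _ => sub_nonneg.2 (hlam (mem_range.1 hi).le)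
  calc ∑ i ∈ range m, lam i * β i
      = lam N * ∑ i ∈ range m, β i + ∑ i ∈ range m, (lam i - lam N) * β i := by
        rw [mul_sum, ← sum_add_distrib]; congr 1; ext; ring
    _ ≤ lam N * N + ∑ i ∈ range N, (lam i - lam N) :=
        add_le_add (mul_le_mul_of_nonneg_left hβN (hlam₀ N))
          ((sum_le_sum fun i _ => hterm i).trans hfilter)
    _ = ∑ i ∈ range N, lam i := by simp [sum_sub_distrib]; ring

section OrthogonalFamily

variable {E : Type*} [NormedAddCommGroup E] [InnerProductSpace ℝ E]

theorem norm_sub_sum_smul_sq_of_orthogonal {ι : Type*} [DecidableEq ι] {w : ι → E}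
    {μ : ι → ℝ} (hw : ∀ i j, ⟪w i, w j⟫ = if i = j then μ i else 0)
    (x : E) (s : Finset ι) (a : ι → ℝ) :
    ‖x - ∑ i ∈ s, a i • w i‖ ^ 2 =
      ‖x‖ ^ 2 - 2 * ∑ i ∈ s, a i * ⟪w i, x⟫ + ∑ i ∈ s, a i ^ 2 * μ i := by
  have hsum : ‖∑ i ∈ s, a i • w i‖ ^ 2 = ∑ i ∈ s, a i ^ 2 * μ i := by
    rw [← real_inner_self_eq_norm_sq, sum_inner]
    refine sum_congr rfl fun i hi => ?_
    simp only [inner_sum, real_inner_smul_left, real_inner_smul_right, hw, mul_ite, mul_zero,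
      sum_ite_eq, if_pos hi]
    ring
  rw [norm_sub_sq_real, hsum, inner_sum]
  simp only [real_inner_smul_right, real_inner_comm x, mul_comm (a _)]

theorem sum_inner_sq_div_le_norm_sq {ι : Type*} [DecidableEq ι] {w : ι → E} {μ : ι → ℝ}
    (hw : ∀ i j, ⟪w i, w j⟫ = if i = j then μ i else 0) (x : E) (s : Finset ι) :
    ∑ i ∈ s, ⟪w i, x⟫ ^ 2 / μ i ≤ ‖x‖ ^ 2 := by
  have h := norm_sub_sum_smul_sq_of_orthogonal hw x s fun i => ⟪w i, x⟫ / μ i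
  have hterm : ∀ i, (⟪w i, x⟫ / μ i) ^ 2 * μ i = ⟪w i, x⟫ ^ 2 / μ i := fun i => by
    rcases eq_or_ne (μ i) 0 with h0 | h0
    · simp [h0]
    · field_simp
  simp only [hterm, div_mul_eq_mul_div, ← sq] at h
  nlinarith [sq_nonneg ‖x - ∑ i ∈ s, (⟪w i, x⟫ / μ i) • w i‖]

theorem OrthonormalBasis.norm_starProjection_sq_eq_sum {ι : Type*} [Fintype ι]
    {K : Submodule ℝ E} [K.HasOrthogonalProjection] (b : OrthonormalBasis ι ℝ K) (y : E) :
    ‖K.starProjection y‖ ^ 2 = ∑ j, ⟪(b j : E), y⟫ ^ 2 := by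
  rw [K.starProjection_apply, Submodule.norm_coe, ← b.sum_sq_inner_right]
  simp only [Submodule.inner_orthogonalProjectionOnto_eq_of_mem_left]

theorem sum_range_norm_starProjection_sq_le {w : ℕ → E} {μ : ℕ → ℝ}
    (hw : ∀ i j, ⟪w i, w j⟫ = if i = j then μ i else 0) (hμ : Antitone μ) (hμ₀ : ∀ i, 0 ≤ μ i)
    (K : Submodule ℝ E) [FiniteDimensional ℝ K] (m : ℕ) :
    ∑ i ∈ range m, ‖K.starProjection (w i)‖ ^ 2 ≤ ∑ i ∈ range (Module.finrank ℝ K), μ i := by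
  set β : ℕ → ℝ := fun i => ‖K.starProjection (w i)‖ ^ 2 / μ i
  have hnorm : ∀ i, ‖w i‖ ^ 2 = μ i := fun i => by
    rw [← real_inner_self_eq_norm_sq, hw, if_pos rfl]
  have hμβ : ∀ i, μ i * β i = ‖K.starProjection (w i)‖ ^ 2 := fun i => by
    rcases eq_or_ne (μ i) 0 with h0 | h0
    · have : w i = 0 := by rw [← norm_eq_zero, ← sq_eq_zero_iff, hnorm, h0]
      simp [this, h0]
    · exact mul_div_cancel₀ _ h0
  have hβ₁ : ∀ i, β i ≤ 1 := fun i => div_le_one_of_le₀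
    (by rw [← hnorm]; gcongr; exact K.norm_starProjection_apply_le _) (hμ₀ i)
  have hβN : ∑ i ∈ range m, β i ≤ Module.finrank ℝ K := by
    set b := stdOrthonormalBasis ℝ K
    calc ∑ i ∈ range m, β i = ∑ j, ∑ i ∈ range m, ⟪w i, (b j : E)⟫ ^ 2 / μ i := by
          simp only [β, b.norm_starProjection_sq_eq_sum, sum_div, real_inner_comm (w _)]
          exact sum_comm
      _ ≤ ∑ j, ‖(b j : E)‖ ^ 2 := sum_le_sum fun j _ => sum_inner_sq_div_le_norm_sq hw _ _
      _ = Module.finrank ℝ K := by simp [Submodule.norm_coe, b.orthonormal.1 _]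
  calc ∑ i ∈ range m, ‖K.starProjection (w i)‖ ^ 2 = ∑ i ∈ range m, μ i * β i :=
        sum_congr rfl fun i _ => (hμβ i).symm
    _ ≤ _ := sum_range_mul_le_sum_range_of_antitone hμ hμ₀
        (fun i => div_nonneg (sq_nonneg _) (hμ₀ i)) hβ₁ hβN

end OrthogonalFamily

theorem Continuous.integrable_of_compactSpace {X E : Type*} [TopologicalSpace X] [CompactSpace X]
    [MeasurableSpace X] [OpensMeasurableSpace X] {ρ : Measure X} [IsFiniteMeasure ρ]
    [NormedAddCommGroup E] {f : X → E} (hf : Continuous f) : Integrable f ρ :=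
  hf.integrable_of_hasCompactSupport (.of_compactSpace f)

section Mercer

variable {X H : Type*} [TopologicalSpace X] [CompactSpace X] [MeasurableSpace X] [BorelSpace X]
  {ρ : Measure X} [IsFiniteMeasure ρ] [NormedAddCommGroup H] [InnerProductSpace ℝ H]
  {Φ : X → H} {lam : ℕ → ℝ} {ψ : ℕ → X → ℝ}

theorem integral_sq_eq_sum_sq_add_integral_sub_sq (hψ : ∀ i, Continuous (ψ i))
    (horth : ∀ i j, ∫ x, ψ i x * ψ j x ∂ρ = if i = j then 1 else 0) {g : X → ℝ}
    (hg : Continuous g) (s : Finset ℕ) :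
    ∫ x, g x ^ 2 ∂ρ = ∑ i ∈ s, (∫ y, g y * ψ i y ∂ρ) ^ 2 +
      ∫ x, (g x - ∑ i ∈ s, (∫ y, g y * ψ i y ∂ρ) * ψ i x) ^ 2 ∂ρ := by
  set L := ContinuousMap.toLp (E := ℝ) 2 ρ ℝ
  set c : ℕ → ℝ := fun i => ∫ y, g y * ψ i y ∂ρ
  have hinner (f h : C(X, ℝ)) : ⟪L f, L h⟫ = ∫ x, f x * h x ∂ρ := by
    simp [L, ContinuousMap.inner_toLp, mul_comm]
  have hnorm (f : C(X, ℝ)) : ‖L f‖ ^ 2 = ∫ x, f x ^ 2 ∂ρ := by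
    rw [← real_inner_self_eq_norm_sq, hinner]
    simp only [sq]
  have key := norm_sub_sum_smul_sq_of_orthogonal (w := fun i => L ⟨ψ i, hψ i⟩) (μ := 1)
    (fun i j => by simp [hinner, horth]) (L ⟨g, hg⟩) s c
  have hc : ∀ i, ⟪L ⟨ψ i, hψ i⟩, L ⟨g, hg⟩⟫ = c i := fun i => by simp [hinner, c, mul_comm]
  simp only [hc, ← map_smul, ← map_sum, ← map_sub, hnorm, Pi.one_apply, mul_one] at key
  simp only [ContinuousMap.sub_apply, ContinuousMap.coe_sum, Finset.sum_apply,
    ContinuousMap.smul_apply, ContinuousMap.coe_mk, smul_eq_mul] at key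
  rw [key]
  simp only [c, sq]
  ring

theorem integral_sum_range_mul_sq (hψ : ∀ i, Continuous (ψ i))
    (horth : ∀ i j, ∫ x, ψ i x * ψ j x ∂ρ = if i = j then 1 else 0) (m : ℕ) :
    ∫ x, ∑ i ∈ range m, lam i * ψ i x ^ 2 ∂ρ = ∑ i ∈ range m, lam i := by
  rw [integral_finsetSum _ fun i _ =>
    (by fun_prop : Continuous fun x => lam i * ψ i x ^ 2).integrable_of_compactSpace]
  simp [sq, integral_const_mul, horth]

theorem hasSum_integral_norm_sq (hΦ : Continuous Φ) (hlam₀ : ∀ i, 0 ≤ lam i)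
    (hψ : ∀ i, Continuous (ψ i))
    (horth : ∀ i j, ∫ x, ψ i x * ψ j x ∂ρ = if i = j then 1 else 0)
    (hmercer : ∀ x y, HasSum (fun i => lam i * ψ i x * ψ i y) ⟪Φ x, Φ y⟫) :
    HasSum lam (∫ x, ‖Φ x‖ ^ 2 ∂ρ) := by
  have hdiag : ∀ x, HasSum (fun i => lam i * ψ i x ^ 2) (‖Φ x‖ ^ 2) := fun x => by
    simpa [mul_assoc, ← sq] using hmercer x x
  rw [hasSum_iff_tendsto_nat_of_nonneg hlam₀]
  refine (tendsto_congr fun m => integral_sum_range_mul_sq hψ horth m).1 ?_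
  refine tendsto_integral_of_dominated_convergence (fun x => ‖Φ x‖ ^ 2)
    (fun m => (continuous_finsetSum _ fun i _ =>
      continuous_const.mul ((hψ i).pow 2)).aestronglyMeasurable_of_compactSpace)
    (hΦ.norm.pow 2).integrable_of_compactSpace (fun m => ae_of_all _ fun x => ?_)
    (ae_of_all _ fun x => (hdiag x).tendsto_sum_nat)
  have hterm : ∀ i, 0 ≤ lam i * ψ i x ^ 2 := fun i => mul_nonneg (hlam₀ i) (sq_nonneg _)
  rw [Real.norm_of_nonneg (sum_nonneg fun i _ => hterm i)]
  exact sum_le_hasSum _ (fun i _ => hterm i) (hdiag x)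

/-- For `g = ψ i` this is the eigenvector of the covariance operator `∫ ⟪·, Φ y⟫ Φ y dρ` with
eigenvalue `lam i`. -/
noncomputable def featureIntegral (ρ : Measure X) (Φ : X → H) (g : X → ℝ) : H :=
  ∫ y, g y • Φ y ∂ρ

variable [CompleteSpace H]

theorem inner_featureIntegral (hΦ : Continuous Φ) {g : X → ℝ} (hg : Continuous g) (u : H) :
    ⟪u, featureIntegral ρ Φ g⟫ = ∫ y, ⟪u, Φ y⟫ * g y ∂ρ := by
  rw [featureIntegral, ← integral_inner
    ((hg.smul hΦ).integrable_of_compactSpace (f := fun y => g y • Φ y))]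
  simp only [real_inner_smul_right, mul_comm]

theorem inner_featureIntegral_eigenfunction (hΦ : Continuous Φ) (hψ : ∀ i, Continuous (ψ i))
    (heig : ∀ i x, ∫ y, ⟪Φ x, Φ y⟫ * ψ i y ∂ρ = lam i * ψ i x) (i : ℕ) (x : X) :
    ⟪Φ x, featureIntegral ρ Φ (ψ i)⟫ = lam i * ψ i x :=
  (inner_featureIntegral hΦ (hψ i) _).trans (heig i x)

theorem inner_featureIntegral_eigenfunctions (hΦ : Continuous Φ) (hψ : ∀ i, Continuous (ψ i))
    (horth : ∀ i j, ∫ x, ψ i x * ψ j x ∂ρ = if i = j then 1 else 0)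
    (heig : ∀ i x, ∫ y, ⟪Φ x, Φ y⟫ * ψ i y ∂ρ = lam i * ψ i x) (i j : ℕ) :
    ⟪featureIntegral ρ Φ (ψ i), featureIntegral ρ Φ (ψ j)⟫ = if i = j then lam i else 0 := by
  rw [inner_featureIntegral hΦ (hψ j)]
  simp_rw [fun y => real_inner_comm (Φ y) (featureIntegral ρ Φ (ψ i)),
    inner_featureIntegral_eigenfunction hΦ hψ heig, mul_assoc, integral_const_mul, horth]
  split_ifs <;> simp

theorem norm_sub_sum_eigenexpansion_sq (hΦ : Continuous Φ) (hψ : ∀ i, Continuous (ψ i))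
    (horth : ∀ i j, ∫ x, ψ i x * ψ j x ∂ρ = if i = j then 1 else 0)
    (heig : ∀ i x, ∫ y, ⟪Φ x, Φ y⟫ * ψ i y ∂ρ = lam i * ψ i x) (x : X) (m : ℕ) :
    ‖Φ x - ∑ i ∈ range m, ψ i x • featureIntegral ρ Φ (ψ i)‖ ^ 2 =
      ‖Φ x‖ ^ 2 - ∑ i ∈ range m, lam i * ψ i x ^ 2 := by
  rw [norm_sub_sum_smul_sq_of_orthogonal (inner_featureIntegral_eigenfunctions hΦ hψ horth heig)]
  simp only [real_inner_comm (Φ x), inner_featureIntegral_eigenfunction hΦ hψ heig,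
    mul_left_comm (ψ _ x), ← sq, mul_comm (ψ _ x ^ 2)]
  ring

theorem integral_inner_sq_le (hΦ : Continuous Φ) (hψ : ∀ i, Continuous (ψ i))
    (horth : ∀ i j, ∫ x, ψ i x * ψ j x ∂ρ = if i = j then 1 else 0)
    (heig : ∀ i x, ∫ y, ⟪Φ x, Φ y⟫ * ψ i y ∂ρ = lam i * ψ i x) (u : H) (m : ℕ) :
    ∫ x, ⟪u, Φ x⟫ ^ 2 ∂ρ ≤ ∑ i ∈ range m, ⟪u, featureIntegral ρ Φ (ψ i)⟫ ^ 2 +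
      ‖u‖ ^ 2 * (∫ x, ‖Φ x‖ ^ 2 ∂ρ - ∑ i ∈ range m, lam i) := by
  set w := fun i => featureIntegral ρ Φ (ψ i)
  have hg : Continuous fun x => ⟪u, Φ x⟫ := continuous_const.inner hΦ
  rw [integral_sq_eq_sum_sq_add_integral_sub_sq hψ horth hg (range m)]
  simp only [← inner_featureIntegral hΦ (hψ _) u]
  gcongr
  have hresidual : ∀ x, ⟪u, Φ x⟫ - ∑ i ∈ range m, ⟪u, w i⟫ * ψ i x =
      ⟪u, Φ x - ∑ i ∈ range m, ψ i x • w i⟫ := fun x => by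
    simp only [inner_sub_right, inner_sum, real_inner_smul_right, mul_comm]
  have hpointwise : ∀ x, (⟪u, Φ x⟫ - ∑ i ∈ range m, ⟪u, w i⟫ * ψ i x) ^ 2 ≤
      ‖u‖ ^ 2 * (‖Φ x‖ ^ 2 - ∑ i ∈ range m, lam i * ψ i x ^ 2) := fun x => by
    rw [hresidual, ← norm_sub_sum_eigenexpansion_sq hΦ hψ horth heig, ← mul_pow]
    exact sq_le_sq.2 ((abs_real_inner_le_norm _ _).trans (le_abs_self _))
  have hF : Continuous fun x => ∑ i ∈ range m, lam i * ψ i x ^ 2 := by fun_prop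
  calc ∫ x, (⟪u, Φ x⟫ - ∑ i ∈ range m, ⟪u, w i⟫ * ψ i x) ^ 2 ∂ρ
      ≤ ∫ x, ‖u‖ ^ 2 * (‖Φ x‖ ^ 2 - ∑ i ∈ range m, lam i * ψ i x ^ 2) ∂ρ :=
        integral_mono (by fun_prop : Continuous _).integrable_of_compactSpace
          (by fun_prop : Continuous _).integrable_of_compactSpace hpointwise
    _ = ‖u‖ ^ 2 * (∫ x, ‖Φ x‖ ^ 2 ∂ρ - ∑ i ∈ range m, lam i) := by
        rw [integral_const_mul, integral_sub
          ((hΦ.norm.pow 2).integrable_of_compactSpace (f := fun x => ‖Φ x‖ ^ 2))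
          hF.integrable_of_compactSpace, integral_sum_range_mul_sq hψ horth]

theorem integral_norm_starProjection_sq_le (hΦ : Continuous Φ) (hlam : Antitone lam)
    (hlam₀ : ∀ i, 0 ≤ lam i) (hψ : ∀ i, Continuous (ψ i))
    (horth : ∀ i j, ∫ x, ψ i x * ψ j x ∂ρ = if i = j then 1 else 0)
    (heig : ∀ i x, ∫ y, ⟪Φ x, Φ y⟫ * ψ i y ∂ρ = lam i * ψ i x)
    (hmercer : ∀ x y, HasSum (fun i => lam i * ψ i x * ψ i y) ⟪Φ x, Φ y⟫)
    (K : Submodule ℝ H) [FiniteDimensional ℝ K] :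
    ∫ x, ‖K.starProjection (Φ x)‖ ^ 2 ∂ρ ≤ ∑ i ∈ range (Module.finrank ℝ K), lam i := by
  set b := stdOrthonormalBasis ℝ K
  set N := Module.finrank ℝ K
  set tail : ℕ → ℝ := fun m => ∫ x, ‖Φ x‖ ^ 2 ∂ρ - ∑ i ∈ range m, lam i
  have htail : Tendsto tail atTop (𝓝 0) := by
    have := (tendsto_const_nhds (x := ∫ x, ‖Φ x‖ ^ 2 ∂ρ)).sub
      (hasSum_integral_norm_sq hΦ hlam₀ hψ horth hmercer).tendsto_sum_nat
    rwa [sub_self] at this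
  have hbound : ∀ m, ∫ x, ‖K.starProjection (Φ x)‖ ^ 2 ∂ρ ≤ ∑ i ∈ range N, lam i + N * tail m := by
    intro m
    calc ∫ x, ‖K.starProjection (Φ x)‖ ^ 2 ∂ρ = ∑ j, ∫ x, ⟪(b j : H), Φ x⟫ ^ 2 ∂ρ := by
          simp only [b.norm_starProjection_sq_eq_sum]
          exact integral_finsetSum _ fun j _ =>
            (by fun_prop : Continuous _).integrable_of_compactSpace
      _ ≤ ∑ j, (∑ i ∈ range m, ⟪(b j : H), featureIntegral ρ Φ (ψ i)⟫ ^ 2 + tail m) := by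
          gcongr with j
          simpa [Submodule.norm_coe, b.orthonormal.1 j] using
            integral_inner_sq_le hΦ hψ horth heig (b j : H) m
      _ = ∑ i ∈ range m, ‖K.starProjection (featureIntegral ρ Φ (ψ i))‖ ^ 2 + N * tail m := by
          simp [sum_add_distrib, b.norm_starProjection_sq_eq_sum, sum_comm (γ := Fin N), N]
      _ ≤ ∑ i ∈ range N, lam i + N * tail m := by
          gcongr
          exact sum_range_norm_starProjection_sq_le
            (inner_featureIntegral_eigenfunctions hΦ hψ horth heig) hlam hlam₀ K m
  refine ge_of_tendsto' (x := atTop) ?_ hbound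
  simpa using (htail.const_mul (N : ℝ)).const_add (∑ i ∈ range N, lam i)

theorem tsum_nat_add_le_integral_norm_starProjection_orthogonal_sq (hΦ : Continuous Φ)
    (hlam : Antitone lam) (hlam₀ : ∀ i, 0 ≤ lam i) (hψ : ∀ i, Continuous (ψ i))
    (horth : ∀ i j, ∫ x, ψ i x * ψ j x ∂ρ = if i = j then 1 else 0)
    (heig : ∀ i x, ∫ y, ⟪Φ x, Φ y⟫ * ψ i y ∂ρ = lam i * ψ i x)
    (hmercer : ∀ x y, HasSum (fun i => lam i * ψ i x * ψ i y) ⟪Φ x, Φ y⟫)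
    (K : Submodule ℝ H) [FiniteDimensional ℝ K] {n : ℕ} (hKn : Module.finrank ℝ K ≤ n) :
    ∑' i, lam (n + i) ≤ ∫ x, ‖Kᗮ.starProjection (Φ x)‖ ^ 2 ∂ρ := by
  have hsum := hasSum_integral_norm_sq hΦ hlam₀ hψ horth hmercer
  have hsplit : ∑ i ∈ range n, lam i + ∑' i, lam (n + i) = ∫ x, ‖Φ x‖ ^ 2 ∂ρ := by
    simpa [add_comm] using (hsum.summable.sum_add_tsum_nat_add n).trans hsum.tsum_eq
  have hpythagoras : ∫ x, ‖Kᗮ.starProjection (Φ x)‖ ^ 2 ∂ρ =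
      ∫ x, ‖Φ x‖ ^ 2 ∂ρ - ∫ x, ‖K.starProjection (Φ x)‖ ^ 2 ∂ρ := by
    rw [← integral_sub ((hΦ.norm.pow 2).integrable_of_compactSpace (f := fun x => ‖Φ x‖ ^ 2))
      (by fun_prop : Continuous fun x => ‖K.starProjection (Φ x)‖ ^ 2).integrable_of_compactSpace]
    congr 1 with x
    linarith [K.norm_sq_eq_add_norm_sq_starProjection (Φ x)]
  have hrank : ∑ i ∈ range (Module.finrank ℝ K), lam i ≤ ∑ i ∈ range n, lam i :=
    sum_le_sum_of_subset_of_nonneg (range_subset_range.2 hKn) fun i _ _ => hlam₀ i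
  linarith [integral_norm_starProjection_sq_le hΦ hlam hlam₀ hψ horth heig hmercer K]

end Mercer

theorem ofReal_abs_inner_le_iSup_error {X H ι : Type*} [TopologicalSpace X]
    [NormedAddCommGroup H] [InnerProductSpace ℝ H] {Φ : X → H} {pts : ι → X} {G : H → C(X, ℝ)}
    (hG : ∀ f f' : H, ‖f‖ ≤ 1 → ‖f'‖ ≤ 1 →
      (∀ i, ⟪f, Φ (pts i)⟫ = ⟪f', Φ (pts i)⟫) → G f = G f')
    {h : H} (hh : ‖h‖ ≤ 1) (hperp : ∀ i, ⟪h, Φ (pts i)⟫ = 0) (x : X) :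
    ENNReal.ofReal |⟪h, Φ x⟫| ≤
      ⨆ (f : H) (_ : ‖f‖ ≤ 1), ⨆ x : X, (‖⟪f, Φ x⟫ - G f x‖₊ : ℝ≥0∞) := by
  have hle (f : H) (hf : ‖f‖ ≤ 1) : ENNReal.ofReal |⟪f, Φ x⟫ - G f x| ≤
      ⨆ (f : H) (_ : ‖f‖ ≤ 1), ⨆ x : X, (‖⟪f, Φ x⟫ - G f x‖₊ : ℝ≥0∞) := by
    rw [← Real.enorm_eq_ofReal_abs, enorm_eq_nnnorm]
    exact le_iSup₂_of_le f hf (le_iSup_of_le x le_rfl)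
  have hneg : G (-h) = G h := hG _ _ (by rwa [norm_neg]) hh fun i => by simp [hperp]
  have htriangle : 2 * |⟪h, Φ x⟫| ≤ |⟪h, Φ x⟫ - G h x| + |⟪-h, Φ x⟫ - G (-h) x| := by
    rw [hneg, inner_neg_left, ← abs_two, ← abs_mul]
    simpa [two_mul, sub_eq_add_neg, add_assoc, add_comm, add_left_comm] using
      abs_sub (⟪h, Φ x⟫ - G h x) (-⟪h, Φ x⟫ - G h x)
  rcases le_total |⟪-h, Φ x⟫ - G (-h) x| |⟪h, Φ x⟫ - G h x| with hmax | hmax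
  · exact (ENNReal.ofReal_le_ofReal (by linarith)).trans (hle h hh)
  · exact (ENNReal.ofReal_le_ofReal (by linarith)).trans (hle (-h) (by rwa [norm_neg]))

theorem worst_case_Linfty_error_ge_sqrt_tail_general
    {X : Type*} [MetricSpace X] [CompactSpace X] [MeasurableSpace X] [BorelSpace X]
    (ρ : Measure X) [IsProbabilityMeasure ρ]
    {H : Type*} [NormedAddCommGroup H] [InnerProductSpace ℝ H] [CompleteSpace H]
    (Φ : X → H) (hΦc : Continuous Φ)
    (lam : ℕ → ℝ) (hlam_anti : Antitone lam) (hlam_nonneg : ∀ i, 0 ≤ lam i)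
    (ψ : ℕ → X → ℝ) (hψc : ∀ i, Continuous (ψ i))
    (horth : ∀ i j, ∫ x, ψ i x * ψ j x ∂ρ = if i = j then 1 else 0)
    (heig : ∀ i x, ∫ y, ⟪Φ x, Φ y⟫ * ψ i y ∂ρ = lam i * ψ i x)
    (hmercer : ∀ x y, HasSum (fun i => lam i * ψ i x * ψ i y) ⟪Φ x, Φ y⟫)
    (n : ℕ) (pts : Fin n → X) (G : H → C(X, ℝ))
    (hG : ∀ f f' : H, ‖f‖ ≤ 1 → ‖f'‖ ≤ 1 →
      (∀ i, ⟪f, Φ (pts i)⟫ = ⟪f', Φ (pts i)⟫) → G f = G f') :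
    ENNReal.ofReal (Real.sqrt (∑' i : ℕ, lam (n + i))) ≤
      ⨆ (f : H) (_ : ‖f‖ ≤ 1), ⨆ x : X, (‖⟪f, Φ x⟫ - G f x‖₊ : ℝ≥0∞) := by
  set K := Submodule.span ℝ (Set.range fun i => Φ (pts i))
  have : FiniteDimensional ℝ K := .span_of_finite ℝ (Set.finite_range _)
  have hKn : Module.finrank ℝ K ≤ n := (finrank_range_le_card _).trans_eq (Fintype.card_fin n)
  set r := fun x => Kᗮ.starProjection (Φ x)
  obtain ⟨x₀, hx₀⟩ := exists_integral_le (μ := ρ)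
    (by fun_prop : Continuous fun x => ‖r x‖ ^ 2).integrable_of_compactSpace
  have htail := (tsum_nat_add_le_integral_norm_starProjection_orthogonal_sq hΦc hlam_anti
    hlam_nonneg hψc horth heig hmercer K hKn).trans hx₀
  set h := ‖r x₀‖⁻¹ • r x₀
  have hh : ‖h‖ ≤ 1 := by
    rw [norm_smul, norm_inv, norm_norm]
    exact inv_mul_le_one_of_le₀ le_rfl (norm_nonneg _)
  have hperp (i : Fin n) : ⟪h, Φ (pts i)⟫ = 0 :=
    Submodule.inner_left_of_mem_orthogonal (Submodule.subset_span (Set.mem_range_self i))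
      (Kᗮ.smul_mem _ (Kᗮ.starProjection_apply_mem _))
  have hval : ⟪h, Φ x₀⟫ = ‖r x₀‖ := by
    have := Kᗮ.re_inner_starProjection_eq_normSq (Φ x₀)
    rw [RCLike.re_to_real, ← Submodule.norm_coe, ← Kᗮ.starProjection_apply] at this
    rw [real_inner_smul_left, this, sq, ← mul_assoc, inv_mul_mul_self]
  calc ENNReal.ofReal (Real.sqrt (∑' i, lam (n + i))) ≤ ENNReal.ofReal |⟪h, Φ x₀⟫| := by
        rw [hval, abs_norm]
        exact ENNReal.ofReal_le_ofReal
          ((Real.sqrt_le_sqrt htail).trans_eq (Real.sqrt_sq (norm_nonneg _)))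
    _ ≤ _ := ofReal_abs_inner_le_iSup_error hG hh hperp x₀

/-- Any estimator `G` mapping the unit ball of `H` to `C(X)` that depends only on the
`n` point evaluations `⟪f, Φ(x_i)⟫` has worst-case `L^∞` error at least
`(Σ_{i=n+1}^∞ λ_i)^{1/2}`. -/
theorem worst_case_Linfty_error_ge_sqrt_tail
    {X : Type*} [MetricSpace X] [CompactSpace X] [MeasurableSpace X] [BorelSpace X]
    (ρ : Measure X) [IsProbabilityMeasure ρ]
    {H : Type*} [NormedAddCommGroup H] [InnerProductSpace ℝ H] [CompleteSpace H]
    (Φ : X → H) (hΦc : Continuous Φ) (hΦ : ∀ x, ‖Φ x‖ ≤ 1)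
    (lam : ℕ → ℝ) (hlam_anti : Antitone lam) (hlam_nonneg : ∀ i, 0 ≤ lam i)
    (ψ : ℕ → X → ℝ) (hψc : ∀ i, Continuous (ψ i))
    (horth : ∀ i j, ∫ x, ψ i x * ψ j x ∂ρ = if i = j then 1 else 0)
    (heig : ∀ i x, ∫ y, ⟪Φ x, Φ y⟫ * ψ i y ∂ρ = lam i * ψ i x)
    (hmercer : ∀ x y, HasSum (fun i => lam i * ψ i x * ψ i y) ⟪Φ x, Φ y⟫)
    (n : ℕ) (pts : Fin n → X) (G : H → C(X, ℝ))
    (hG : ∀ f f' : H, ‖f‖ ≤ 1 → ‖f'‖ ≤ 1 →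
      (∀ i, ⟪f, Φ (pts i)⟫ = ⟪f', Φ (pts i)⟫) → G f = G f') :
    ENNReal.ofReal (Real.sqrt (∑' i : ℕ, lam (n + i))) ≤
      ⨆ (f : H) (_ : ‖f‖ ≤ 1), ⨆ x : X, (‖⟪f, Φ x⟫ - G f x‖₊ : ℝ≥0∞) :=
  worst_case_Linfty_error_ge_sqrt_tail_general ρ Φ hΦc lam hlam_anti hlam_nonneg ψ hψc horth heig
    hmercer n pts G hG
end
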